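/- arXiv:2210.01390 — 5 statements merged into one kernel-verified Lean document; each statement's English description precedes it below -/
import Mathlib

section
/- For any two density matrices ρ and σ of the same size, 1 − F(ρ,σ) ≤ dist(ρ,σ); that is, one minus the fidelity is a lower bound on the trace distance. (First inequality of Lemma on fidelity/trace-distance relations, item 1.) -/
open scoped Matrix ComplexOrder

/-- The positive semidefinite square root of a matrix (junk value `0` if the matrix is not
positive semidefinite). -/
noncomputable def psdSqrt {m : ℕ} (A : Matrix (Fin m) (Fin m) ℂ) : Matrix (Fin m) (Fin m) ℂ :=
  letI := Classical.dec A.PosSemidef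
  if h : A.PosSemidef then
    (h.1.eigenvectorUnitary : Matrix (Fin m) (Fin m) ℂ) *
      Matrix.diagonal ((↑) ∘ (fun x : ℝ => Real.sqrt x) ∘ h.1.eigenvalues) *
      (star h.1.eigenvectorUnitary : Matrix (Fin m) (Fin m) ℂ)
  else 0

/-- The fidelity `F(ρ,σ) = tr √(√ρ · σ · √ρ)` of two density matrices. -/
noncomputable def fidelity {m : ℕ} (ρ σ : Matrix (Fin m) (Fin m) ℂ) : ℝ :=
  ((psdSqrt (psdSqrt ρ * σ * psdSqrt ρ)).trace).re

/-- The trace distance `dist(ρ,σ) = (1/2)·tr √((ρ−σ)†(ρ−σ))` of two density matrices. -/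
noncomputable def traceDist {m : ℕ} (ρ σ : Matrix (Fin m) (Fin m) ℂ) : ℝ :=
  (1 / 2) * ((psdSqrt ((ρ - σ)ᴴ * (ρ - σ))).trace).re

/-! Put `a = √ρ`, `b = √σ`. The fidelity is `tr |b a| ≥ Re tr (b a)`, and for unit-trace `ρ`
and `σ` we have `tr (a - b)² = 2 - 2 Re tr (b a)`. So it suffices to prove the Powers–Størmer
inequality `tr (a - b)² ≤ tr |a² - b²| = 2 dist(ρ, σ)`. For this let `W` be the sign unitary of
`X = a - b`. Since `|X| ± X ≥ 0` and `2 (a² - b²) = X (a + b) + (a + b) X` with `W` commuting with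
`X`, we get `tr (a - b)² = tr (X a) - tr (X b) ≤ tr (|X| (a + b)) = Re tr (W (a² - b²))`, and the
last trace is at most `tr |W (a² - b²)| = tr |a² - b²|`. -/

open scoped MatrixOrder

lemma CFC.abs_unitary_mul {A : Type*} [Ring A] [StarRing A] [TopologicalSpace A] [Algebra ℝ A]
    [NonUnitalContinuousFunctionalCalculus ℝ A IsSelfAdjoint] [PartialOrder A]
    [StarOrderedRing A] [NonnegSpectrumClass ℝ A] {W : A} (hW : W ∈ unitary A) (C : A) :
    CFC.abs (W * C) = CFC.abs C := by
  rw [CFC.abs, CFC.abs, star_mul, mul_assoc, ← mul_assoc (star W),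
    Unitary.star_mul_self_of_mem hW, one_mul]

namespace Matrix

lemma norm_apply_sq_le_re_conjTranspose_mul_self_apply {l n 𝕜 : Type*} [Fintype l] [RCLike 𝕜]
    (N : Matrix l n 𝕜) (i : n) (j : l) : ‖N j i‖ ^ 2 ≤ RCLike.re ((Nᴴ * N) i i) := by
  have hdiag : RCLike.re ((Nᴴ * N) i i) = ∑ k, ‖N k i‖ ^ 2 := by
    simp [mul_apply, RCLike.conj_mul]
  rw [hdiag]
  exact Finset.single_le_sum (f := fun k => ‖N k i‖ ^ 2) (fun _ _ => by positivity)
    (Finset.mem_univ j)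

variable {n 𝕜 : Type*} [Fintype n] [DecidableEq n] [RCLike 𝕜]

lemma IsHermitian.trace_cfc {A : Matrix n n 𝕜} (hA : A.IsHermitian) (f : ℝ → ℝ) :
    (cfc f A).trace = ∑ i, (f (hA.eigenvalues i) : 𝕜) := by
  rw [hA.cfc_eq, IsHermitian.cfc, Unitary.conjStarAlgAut_apply, trace_mul_cycle,
    Unitary.coe_star_mul_self, one_mul, trace_diagonal]
  rfl

lemma re_trace_le_re_trace_abs (M : Matrix n n 𝕜) :
    RCLike.re M.trace ≤ RCLike.re (CFC.abs M).trace := by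
  have hH : (star M * M).IsHermitian := isHermitian_conjTranspose_mul_self M
  set U := hH.eigenvectorUnitary
  -- In an eigenbasis of `Mᴴ M`, each diagonal entry of `M` is bounded by a singular value.
  set N := (star U : Matrix n n 𝕜) * M * U
  have hN : N.trace = M.trace := by
    rw [trace_mul_cycle, Unitary.mul_star_self_of_mem U.2, one_mul]
  have hNN : Nᴴ * N = diagonal (RCLike.ofReal ∘ hH.eigenvalues) := by
    rw [← hH.conjStarAlgAut_star_eigenvectorUnitary, Unitary.conjStarAlgAut_apply]
    simp only [N, ← star_eq_conjTranspose, star_mul, star_star, mul_assoc]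
    rw [← mul_assoc (U : Matrix n n 𝕜), Unitary.mul_star_self_of_mem U.2, one_mul,
      Unitary.coe_star, star_star]
  have hdiag (i : n) : RCLike.re (N i i) ≤ √(hH.eigenvalues i) := by
    have hle := norm_apply_sq_le_re_conjTranspose_mul_self_apply N i i
    rw [hNN] at hle
    simp only [diagonal_apply_eq, Function.comp_apply, RCLike.ofReal_re] at hle
    exact (RCLike.re_le_norm _).trans (Real.le_sqrt_of_sq_le hle)
  rw [CFC.abs, CFC.sqrt_eq_real_sqrt _ (star_mul_self_nonneg M), cfcₙ_eq_cfc, hH.trace_cfc,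
    ← hN, trace, map_sum, map_sum]
  exact Finset.sum_le_sum fun i _ => by simpa using hdiag i

lemma PosSemidef.re_trace_mul_nonneg {A B : Matrix n n 𝕜} (hA : A.PosSemidef)
    (hB : B.PosSemidef) : 0 ≤ RCLike.re (A * B).trace := by
  obtain ⟨R, rfl⟩ := CStarAlgebra.nonneg_iff_eq_star_mul_self.mp hA.nonneg
  rw [mul_assoc, trace_mul_comm, mul_assoc, ← mul_assoc, star_eq_conjTranspose]
  exact (RCLike.nonneg_iff.mp (hB.mul_mul_conjTranspose_same R).trace_nonneg).1

lemma IsHermitian.exists_unitary_commute_mul_eq_abs {X : Matrix n n 𝕜} (hX : X.IsHermitian) :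
    ∃ W ∈ unitary (Matrix n n 𝕜), Commute W X ∧ W * X = CFC.abs X := by
  have hcont (f : ℝ → ℝ) : ContinuousOn f (spectrum ℝ X) :=
    X.finite_real_spectrum.continuousOn f
  have hX' : IsSelfAdjoint X := hX
  let sign : ℝ → ℝ := fun x => if 0 ≤ x then 1 else -1
  refine ⟨cfc sign X, ?_, ?_, ?_⟩
  · rw [cfc_unitary_iff sign X hX' (hcont sign)]
    intro x _
    by_cases hx : 0 ≤ x <;> simp [sign, hx]
  · simpa only [cfc_id ℝ X hX'] using cfc_commute_cfc sign id X
  · nth_rewrite 2 [← cfc_id ℝ X hX']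
    rw [← cfc_mul sign id X (hcont sign) (hcont id), CFC.abs_eq_cfc_norm X hX']
    refine cfc_congr fun x _ => ?_
    by_cases hx : 0 ≤ x
    · simp [sign, hx, abs_of_nonneg hx]
    · simp [sign, hx, abs_of_neg (not_le.mp hx)]

/-- The Powers–Størmer inequality. -/
theorem PosSemidef.re_trace_sub_mul_sub_le {a b : Matrix n n 𝕜} (ha : a.PosSemidef)
    (hb : b.PosSemidef) :
    RCLike.re ((a - b) * (a - b)).trace ≤ RCLike.re (CFC.abs (a * a - b * b)).trace := by
  set X := a - b
  have hX : IsSelfAdjoint X := ha.1.sub hb.1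
  obtain ⟨W, hW, hWX, hWX_abs⟩ := hX.isHermitian.exists_unitary_commute_mul_eq_abs
  have hneg : 0 ≤ RCLike.re ((CFC.abs X - X) * a).trace := by
    rw [CFC.abs_sub_self X]
    exact (nonneg_iff_posSemidef.mp (smul_nonneg zero_le_two (CFC.negPart_nonneg X)))
      |>.re_trace_mul_nonneg ha
  have hpos : 0 ≤ RCLike.re ((CFC.abs X + X) * b).trace := by
    rw [CFC.abs_add_self X]
    exact (nonneg_iff_posSemidef.mp (smul_nonneg zero_le_two (CFC.posPart_nonneg X)))
      |>.re_trace_mul_nonneg hb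
  have hsym : (W * (a * a - b * b)).trace = (CFC.abs X * (a + b)).trace := by
    have hXY : (W * (X * (a + b))).trace = (CFC.abs X * (a + b)).trace := by
      rw [← mul_assoc, hWX_abs]
    have hYX : (W * ((a + b) * X)).trace = (CFC.abs X * (a + b)).trace := by
      rw [← mul_assoc, trace_mul_cycle, ← hWX.eq, hWX_abs]
    have hC : X * (a + b) + (a + b) * X = (2 : 𝕜) • (a * a - b * b) := by
      rw [two_smul]
      simp only [X]
      noncomm_ring
    have h := congrArg (fun M => (W * M).trace) hC
    rw [mul_add, trace_add, hXY, hYX, mul_smul_comm, trace_smul, smul_eq_mul] at h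
    linear_combination -h / 2
  calc RCLike.re ((a - b) * (a - b)).trace
      = RCLike.re (X * a).trace - RCLike.re (X * b).trace := by
        rw [mul_sub, trace_sub, map_sub]
    _ ≤ RCLike.re (CFC.abs X * a).trace + RCLike.re (CFC.abs X * b).trace := by
        simp only [sub_mul, add_mul, trace_sub, trace_add, map_sub, map_add] at hneg hpos
        linarith
    _ = RCLike.re (W * (a * a - b * b)).trace := by rw [hsym, mul_add, trace_add, map_add]
    _ ≤ RCLike.re (CFC.abs (a * a - b * b)).trace := by
        simpa only [CFC.abs_unitary_mul hW] using re_trace_le_re_trace_abs (W * (a * a - b * b))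

end Matrix

open Matrix

section

variable {m : ℕ}

lemma psdSqrt_eq_sqrt {A : Matrix (Fin m) (Fin m) ℂ} (hA : A.PosSemidef) :
    psdSqrt A = CFC.sqrt A := by
  rw [psdSqrt, dif_pos hA, CFC.sqrt_eq_real_sqrt A hA.nonneg, cfcₙ_eq_cfc, hA.1.cfc_eq,
    IsHermitian.cfc, Unitary.conjStarAlgAut_apply]
  rfl

lemma psdSqrt_conjTranspose_mul_self (M : Matrix (Fin m) (Fin m) ℂ) :
    psdSqrt (Mᴴ * M) = CFC.abs M :=
  psdSqrt_eq_sqrt (posSemidef_conjTranspose_mul_self M)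

lemma fidelity_eq_re_trace_abs {ρ σ : Matrix (Fin m) (Fin m) ℂ} (hρ : ρ.PosSemidef)
    (hσ : σ.PosSemidef) :
    fidelity ρ σ = (CFC.abs (CFC.sqrt σ * CFC.sqrt ρ)).trace.re := by
  have hconj : CFC.sqrt ρ * σ * CFC.sqrt ρ =
      (CFC.sqrt σ * CFC.sqrt ρ)ᴴ * (CFC.sqrt σ * CFC.sqrt ρ) := by
    rw [conjTranspose_mul, ← star_eq_conjTranspose, ← star_eq_conjTranspose,
      (CFC.sqrt_nonneg ρ).isSelfAdjoint.star_eq, (CFC.sqrt_nonneg σ).isSelfAdjoint.star_eq]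
    conv_lhs => rw [← CFC.sqrt_mul_sqrt_self σ hσ.nonneg]
    simp only [mul_assoc]
  rw [fidelity, psdSqrt_eq_sqrt hρ, hconj, psdSqrt_conjTranspose_mul_self]

lemma traceDist_eq_re_trace_abs (ρ σ : Matrix (Fin m) (Fin m) ℂ) :
    traceDist ρ σ = 1 / 2 * (CFC.abs (ρ - σ)).trace.re := by
  rw [traceDist, psdSqrt_conjTranspose_mul_self]

end

/-- For any two density matrices, one minus the fidelity is a lower bound on the
trace distance. -/
theorem one_sub_fidelity_le_traceDist {m : ℕ} (ρ σ : Matrix (Fin m) (Fin m) ℂ)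
    (hρ : ρ.PosSemidef) (hσ : σ.PosSemidef) (hρ1 : ρ.trace = 1) (hσ1 : σ.trace = 1) :
    1 - fidelity ρ σ ≤ traceDist ρ σ := by
  set a := CFC.sqrt ρ
  set b := CFC.sqrt σ
  have haa : a * a = ρ := CFC.sqrt_mul_sqrt_self ρ hρ.nonneg
  have hbb : b * b = σ := CFC.sqrt_mul_sqrt_self σ hσ.nonneg
  have hfid : (b * a).trace.re ≤ fidelity ρ σ :=
    fidelity_eq_re_trace_abs hρ hσ ▸ re_trace_le_re_trace_abs (b * a)
  have hsq : ((a - b) * (a - b)).trace.re = 2 - 2 * (b * a).trace.re := by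
    have hexpand : (a - b) * (a - b) = a * a + b * b - (a * b + b * a) := by noncomm_ring
    rw [hexpand, haa, hbb, trace_sub, trace_add, trace_add, trace_mul_comm a b, hρ1, hσ1]
    simp only [Complex.sub_re, Complex.add_re, Complex.one_re]
    ring
  have hPS :=
    (CFC.sqrt_nonneg ρ).posSemidef.re_trace_sub_mul_sub_le (CFC.sqrt_nonneg σ).posSemidef
  rw [haa, hbb] at hPS
  change ((a - b) * (a - b)).trace.re ≤ (CFC.abs (ρ - σ)).trace.re at hPS
  rw [traceDist_eq_re_trace_abs]
  linarith
end

section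
/- Let u, v, w be unit vectors in a complex inner product space. Then |⟨u,w⟩|² + |⟨v,w⟩|² ≤ 1 + |⟨u,v⟩|. (Pure-state form of the fidelity inequality, used in the soundness analysis of the 7-turn-to-5-turn parallelization theorem: the two acceptance probabilities p₀ = |⟨u,w⟩|² and p₁ = |⟨v,w⟩|² sum to at most 1 plus the overlap |⟨u,v⟩|.) -/
/-! Put `a = ⟪u, w⟫`, `b = ⟪v, w⟫`, `s = |a|² + |b|²` and `x = a • u + b • v`. Then `⟪x, w⟫ = s`,
so `s ≤ ‖x‖` by Cauchy–Schwarz, while expanding `‖x‖²` and using `2|a||b| ≤ s` gives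
`‖x‖² ≤ s (1 + |⟪u, v⟫|)`. Hence `s² ≤ s (1 + |⟪u, v⟫|)`. -/

section RCLike

variable {𝕜 E : Type*} [RCLike 𝕜] [NormedAddCommGroup E] [InnerProductSpace 𝕜 E]

local notation "⟪" x ", " y "⟫" => inner 𝕜 x y

theorem inner_smul_add_smul_left_eq_norm_sq_add_norm_sq (u v w : E) :
    ⟪⟪u, w⟫ • u + ⟪v, w⟫ • v, w⟫ = ((‖⟪u, w⟫‖ ^ 2 + ‖⟪v, w⟫‖ ^ 2 : ℝ) : 𝕜) := by
  simp only [inner_add_left, inner_smul_left, RCLike.conj_mul]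
  push_cast
  ring

theorem norm_smul_add_smul_sq_le (a b : 𝕜) (u v : E) :
    ‖a • u + b • v‖ ^ 2 ≤
      ‖a‖ ^ 2 * ‖u‖ ^ 2 + ‖b‖ ^ 2 * ‖v‖ ^ 2 + 2 * (‖a‖ * ‖b‖ * ‖⟪u, v⟫‖) := by
  have hcross : RCLike.re ⟪a • u, b • v⟫ ≤ ‖a‖ * ‖b‖ * ‖⟪u, v⟫‖ := calc
    RCLike.re ⟪a • u, b • v⟫ ≤ ‖⟪a • u, b • v⟫‖ := RCLike.re_le_norm _
    _ = ‖a‖ * ‖b‖ * ‖⟪u, v⟫‖ := by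
      rw [inner_smul_left, inner_smul_right, norm_mul, norm_mul, RCLike.norm_conj, mul_assoc]
  rw [norm_add_sq (𝕜 := 𝕜), norm_smul, norm_smul, mul_pow, mul_pow]
  linarith

theorem norm_inner_sq_add_norm_inner_sq_le (u v w : E) (hu : ‖u‖ = 1) (hv : ‖v‖ = 1)
    (hw : ‖w‖ = 1) : ‖⟪u, w⟫‖ ^ 2 + ‖⟪v, w⟫‖ ^ 2 ≤ 1 + ‖⟪u, v⟫‖ := by
  set a := ⟪u, w⟫
  set b := ⟪v, w⟫
  set s := ‖a‖ ^ 2 + ‖b‖ ^ 2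
  set x := a • u + b • v
  have hs : 0 ≤ s := by positivity
  have hs_le : s ≤ ‖x‖ := by
    have := norm_inner_le_norm (𝕜 := 𝕜) x w
    rwa [inner_smul_add_smul_left_eq_norm_sq_add_norm_sq, RCLike.norm_ofReal,
      abs_of_nonneg hs, hw, mul_one] at this
  have hx_sq : ‖x‖ ^ 2 ≤ s + 2 * (‖a‖ * ‖b‖ * ‖⟪u, v⟫‖) := by
    simpa [hu, hv] using norm_smul_add_smul_sq_le a b u v
  have hab : 2 * (‖a‖ * ‖b‖) ≤ s := by nlinarith [sq_nonneg (‖a‖ - ‖b‖)]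
  have hs_sq : s ^ 2 ≤ s * (1 + ‖⟪u, v⟫‖) := by
    nlinarith [norm_nonneg ⟪u, v⟫, pow_le_pow_left₀ hs hs_le 2]
  rcases hs.eq_or_lt with hs0 | hs_pos
  · rw [← hs0]; positivity
  · nlinarith

end RCLike

/-- For unit vectors `u v w` in a complex inner product space,
`|⟨u,w⟩|² + |⟨v,w⟩|² ≤ 1 + |⟨u,v⟩|`. -/
theorem abs_inner_sq_add_abs_inner_sq_le {H : Type*} [NormedAddCommGroup H]
    [InnerProductSpace ℂ H] (u v w : H) (hu : ‖u‖ = 1) (hv : ‖v‖ = 1) (hw : ‖w‖ = 1) :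
    ‖(inner ℂ u w : ℂ)‖ ^ 2 + ‖(inner ℂ v w : ℂ)‖ ^ 2 ≤ 1 + ‖(inner ℂ u v : ℂ)‖ :=
  norm_inner_sq_add_norm_inner_sq_le u v w hu hv hw
end

section
/- Let P and I be finite nonempty index sets. Let a₀, a₁ : P → ℂ be vectors with ℓ² norm at most 1, and let ψ, φ : I → ℂ be unit vectors (ℓ² norm 1). Define the vector v : P × I × I → ℂ by v(p,i,j) = (1/2)(a₀(p)·ψ(i)·φ(j) + a₁(p)·φ(i)·ψ(j)). Then the squared ℓ² norm of v is at most (1/2) + (1/2)·|⟨ψ,φ⟩|². (Core inequality in the soundness proof of the distributed SWAP-test protocol: no prover action can make the acceptance probability exceed (1/2)(1 + |⟨ψ|φ⟩|²).) -/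
/-! Write `v = (x + y) / 2` with `x = a₀ ⊗ ψ ⊗ φ` and `y = a₁ ⊗ φ ⊗ ψ`, so that
`‖v‖² = (‖x‖² + ‖y‖² + 2 Re ⟨y, x⟩) / 4`. Here `‖x‖² = ‖a₀‖²`, `‖y‖² = ‖a₁‖²`, and the cross
term factors as `⟨a₁, a₀⟩ ⟨φ, ψ⟩ ⟨ψ, φ⟩ = ⟨a₁, a₀⟩ |⟨ψ, φ⟩|²`. Since
`2 Re ⟨a₁, a₀⟩ ≤ ‖a₀‖² + ‖a₁‖² ≤ 2`, we get `‖v‖² ≤ (1 + |⟨ψ, φ⟩|²) / 2`. -/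

open ComplexConjugate RCLike

section

variable {P I J R 𝕜 : Type*} [Fintype P] [Fintype I] [Fintype J] [RCLike 𝕜]

theorem two_mul_re_mul_conj_le (z w : 𝕜) : 2 * re (z * conj w) ≤ ‖z‖ ^ 2 + ‖w‖ ^ 2 := by
  have := normSq_nonneg (z - w)
  rw [normSq_sub, normSq_eq_def', normSq_eq_def'] at this
  linarith

theorem two_mul_re_sum_mul_conj_le (a b : P → 𝕜) :
    2 * re (∑ p, a p * conj (b p)) ≤ ∑ p, ‖a p‖ ^ 2 + ∑ p, ‖b p‖ ^ 2 := by
  rw [map_sum, Finset.mul_sum, ← Finset.sum_add_distrib]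
  exact Finset.sum_le_sum fun p _ => two_mul_re_mul_conj_le (a p) (b p)

theorem norm_half_mul_add_sq (z w : 𝕜) :
    ‖(1 / 2 : 𝕜) * (z + w)‖ ^ 2 = (‖z‖ ^ 2 + ‖w‖ ^ 2 + 2 * re (z * conj w)) / 4 := by
  rw [norm_mul, mul_pow, ← normSq_eq_def' (z + w), normSq_add, normSq_eq_def', normSq_eq_def']
  norm_num
  ring

def tensor3 [Mul R] (a : P → R) (b : I → R) (c : J → R) (x : P × I × J) : R :=
  a x.1 * b x.2.1 * c x.2.2

theorem sum_tensor3 [CommSemiring R] (a : P → R) (b : I → R) (c : J → R) :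
    ∑ x, tensor3 a b c x = (∑ p, a p) * (∑ i, b i) * (∑ j, c j) := by
  simp_rw [tensor3, Fintype.sum_prod_type, mul_assoc, ← Finset.mul_sum, ← Finset.sum_mul]

theorem sum_norm_sq_tensor3 (a : P → 𝕜) (b : I → 𝕜) (c : J → 𝕜) :
    ∑ x, ‖tensor3 a b c x‖ ^ 2 = (∑ p, ‖a p‖ ^ 2) * (∑ i, ‖b i‖ ^ 2) * (∑ j, ‖c j‖ ^ 2) := by
  simp only [tensor3, norm_mul, mul_pow]
  exact sum_tensor3 (fun p => ‖a p‖ ^ 2) (fun i => ‖b i‖ ^ 2) (fun j => ‖c j‖ ^ 2)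

theorem sum_tensor3_mul_conj (a a' : P → 𝕜) (b b' : I → 𝕜) (c c' : J → 𝕜) :
    ∑ x, tensor3 a b c x * conj (tensor3 a' b' c' x)
      = (∑ p, a p * conj (a' p)) * (∑ i, b i * conj (b' i)) * (∑ j, c j * conj (c' j)) := by
  rw [← sum_tensor3]
  congr 1 with x
  simp only [tensor3, map_mul]
  ring

end

theorem swap_test_soundness_general {P I : Type*} [Fintype P] [Fintype I]
    (a₀ a₁ : P → ℂ) (ψ φ : I → ℂ)
    (ha₀ : ∑ p, ‖a₀ p‖ ^ 2 ≤ 1) (ha₁ : ∑ p, ‖a₁ p‖ ^ 2 ≤ 1)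
    (hψ : ∑ i, ‖ψ i‖ ^ 2 = 1) (hφ : ∑ i, ‖φ i‖ ^ 2 = 1) :
    ∑ x : P × I × I,
        ‖(1 / 2 : ℂ) * (a₀ x.1 * ψ x.2.1 * φ x.2.2 + a₁ x.1 * φ x.2.1 * ψ x.2.2)‖ ^ 2
      ≤ 1 / 2 + 1 / 2 * ‖∑ i, (starRingEnd ℂ) (ψ i) * φ i‖ ^ 2 := by
  set c := ∑ i, conj (ψ i) * φ i
  set t := ∑ p, a₀ p * conj (a₁ p)
  have h_cross : re (∑ x, tensor3 a₀ ψ φ x * conj (tensor3 a₁ φ ψ x)) = re t * ‖c‖ ^ 2 := by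
    have hc : ∑ i, ψ i * conj (φ i) = conj c := by simp [c, mul_comm]
    have hc' : ∑ i, φ i * conj (ψ i) = c := by simp [c, mul_comm]
    rw [sum_tensor3_mul_conj, hc, hc', mul_assoc, RCLike.conj_mul, ← ofReal_pow, re_mul_ofReal]
  have h_t : 2 * re t ≤ ∑ p, ‖a₀ p‖ ^ 2 + ∑ p, ‖a₁ p‖ ^ 2 := two_mul_re_sum_mul_conj_le a₀ a₁
  calc ∑ x : P × I × I, ‖(1 / 2 : ℂ) * (tensor3 a₀ ψ φ x + tensor3 a₁ φ ψ x)‖ ^ 2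
      = (∑ p, ‖a₀ p‖ ^ 2 + ∑ p, ‖a₁ p‖ ^ 2 + 2 * re t * ‖c‖ ^ 2) / 4 := by
        simp only [norm_half_mul_add_sq, ← Finset.sum_div, Finset.sum_add_distrib,
          ← Finset.mul_sum, ← map_sum, h_cross, sum_norm_sq_tensor3, hψ, hφ]
        ring
    _ ≤ 1 / 2 + 1 / 2 * ‖c‖ ^ 2 := by nlinarith [sq_nonneg ‖c‖]

/-- Core inequality in the soundness proof of the distributed SWAP-test protocol: if
`a₀, a₁ : P → ℂ` have ℓ² norm at most 1 and `ψ, φ : I → ℂ` are ℓ²-unit vectors, then the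
vector `v(p,i,j) = (1/2)(a₀(p)ψ(i)φ(j) + a₁(p)φ(i)ψ(j))` has squared ℓ² norm at most
`1/2 + (1/2)|⟨ψ,φ⟩|²`. -/
theorem swap_test_soundness {P I : Type*} [Fintype P] [Fintype I] [Nonempty P] [Nonempty I]
    (a₀ a₁ : P → ℂ) (ψ φ : I → ℂ)
    (ha₀ : ∑ p, ‖a₀ p‖ ^ 2 ≤ 1) (ha₁ : ∑ p, ‖a₁ p‖ ^ 2 ≤ 1)
    (hψ : ∑ i, ‖ψ i‖ ^ 2 = 1) (hφ : ∑ i, ‖φ i‖ ^ 2 = 1) :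
    ∑ x : P × I × I,
        ‖(1 / 2 : ℂ) * (a₀ x.1 * ψ x.2.1 * φ x.2.2 + a₁ x.1 * φ x.2.1 * ψ x.2.2)‖ ^ 2
      ≤ 1 / 2 + 1 / 2 * ‖∑ i, (starRingEnd ℂ) (ψ i) * φ i‖ ^ 2 :=
  swap_test_soundness_general a₀ a₁ ψ φ ha₀ ha₁ hψ hφ
end

section
/- Let P and I be finite nonempty index sets. Let α : P → ℂ be a unit vector and let ψ, φ : I → ℂ be unit vectors. Define v : P × I × I → ℂ by v(p,i,j) = (1/2)(α(p)·ψ(i)·φ(j) + α(p)·φ(i)·ψ(j)). Then the squared ℓ² norm of v equals exactly (1/2) + (1/2)·|⟨ψ,φ⟩|². (Equality case of the distributed SWAP-test acceptance bound, attained by the honest prover; in particular the acceptance probability is 1 when ψ = φ.) -/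
/-!
Since `v = ½ · α ⊗ (ψ ⊗ φ + φ ⊗ ψ)` and the ℓ² norm is multiplicative on tensor products,
`‖v‖² = ¼ ‖ψ ⊗ φ + φ ⊗ ψ‖²`, and expanding the square gives `1 + 1 + 2 Re ⟨ψ ⊗ φ, φ ⊗ ψ⟩`,
where the cross term factors as `⟨ψ, φ⟩ ⟨φ, ψ⟩ = |⟨ψ, φ⟩|²`.
-/

open Finset ComplexConjugate

section

variable {𝕜 ι κ : Type*} [RCLike 𝕜] [Fintype ι] [Fintype κ]

theorem sum_norm_sq_mul_prod (f : ι → 𝕜) (g : κ → 𝕜) :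
    ∑ x : ι × κ, ‖f x.1 * g x.2‖ ^ 2 = (∑ i, ‖f i‖ ^ 2) * ∑ j, ‖g j‖ ^ 2 := by
  simp_rw [norm_mul, mul_pow, Fintype.sum_mul_sum, Fintype.sum_prod_type]

theorem sum_norm_sq_add (u w : ι → 𝕜) :
    ∑ x, ‖u x + w x‖ ^ 2
      = ∑ x, ‖u x‖ ^ 2 + ∑ x, ‖w x‖ ^ 2 + 2 * RCLike.re (∑ x, conj (u x) * w x) := by
  simp_rw [@norm_add_sq 𝕜 𝕜, RCLike.inner_apply', map_sum, sum_add_distrib, ← mul_sum]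
  ring

theorem sum_conj_mul_swap (f g : ι → 𝕜) :
    ∑ x : ι × ι, conj (f x.1 * g x.2) * (g x.1 * f x.2)
      = ((‖∑ i, conj (f i) * g i‖ ^ 2 : ℝ) : 𝕜) := by
  have hconj : ∑ j, conj (g j) * f j = conj (∑ i, conj (f i) * g i) := by
    simp [map_sum, mul_comm]
  calc ∑ x : ι × ι, conj (f x.1 * g x.2) * (g x.1 * f x.2)
      = (∑ i, conj (f i) * g i) * ∑ j, conj (g j) * f j := by
        rw [Fintype.sum_mul_sum, Fintype.sum_prod_type]
        refine sum_congr rfl fun i _ => sum_congr rfl fun j _ => ?_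
        rw [map_mul, mul_mul_mul_comm]
    _ = _ := by rw [hconj, RCLike.mul_conj]; norm_cast

end

theorem swap_test_completeness_general {P I : Type*} [Fintype P] [Fintype I]
    (α : P → ℂ) (ψ φ : I → ℂ)
    (hα : ∑ p, ‖α p‖ ^ 2 = 1)
    (hψ : ∑ i, ‖ψ i‖ ^ 2 = 1) (hφ : ∑ i, ‖φ i‖ ^ 2 = 1) :
    ∑ x : P × I × I,
        ‖(1 / 2 : ℂ) * (α x.1 * ψ x.2.1 * φ x.2.2 + α x.1 * φ x.2.1 * ψ x.2.2)‖ ^ 2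
      = 1 / 2 + 1 / 2 * ‖∑ i, (starRingEnd ℂ) (ψ i) * φ i‖ ^ 2 := by
  have hsymm : ∑ w : I × I, ‖ψ w.1 * φ w.2 + φ w.1 * ψ w.2‖ ^ 2
      = 2 + 2 * ‖∑ i, (starRingEnd ℂ) (ψ i) * φ i‖ ^ 2 := by
    rw [sum_norm_sq_add, sum_norm_sq_mul_prod, sum_norm_sq_mul_prod, sum_conj_mul_swap, hψ, hφ,
      RCLike.ofReal_re]
    ring
  calc ∑ x : P × I × I,
        ‖(1 / 2 : ℂ) * (α x.1 * ψ x.2.1 * φ x.2.2 + α x.1 * φ x.2.1 * ψ x.2.2)‖ ^ 2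
      = ∑ x : P × I × I,
          ‖α x.1 * ((1 / 2 : ℂ) * (ψ x.2.1 * φ x.2.2 + φ x.2.1 * ψ x.2.2))‖ ^ 2 := by
        congr! 3; ring
    _ = ∑ w : I × I, ‖(1 / 2 : ℂ) * (ψ w.1 * φ w.2 + φ w.1 * ψ w.2)‖ ^ 2 := by
        rw [sum_norm_sq_mul_prod α fun w : I × I => (1 / 2 : ℂ) * (ψ w.1 * φ w.2 + φ w.1 * ψ w.2),
          hα, one_mul]
    _ = 1 / 4 * ∑ w : I × I, ‖ψ w.1 * φ w.2 + φ w.1 * ψ w.2‖ ^ 2 := by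
        simp_rw [norm_mul, mul_pow, ← mul_sum]
        norm_num
    _ = _ := by rw [hsymm]; ring

/-- Equality case of the distributed SWAP-test acceptance bound, attained by the honest
prover: if `α : P → ℂ` and `ψ, φ : I → ℂ` are ℓ²-unit vectors, then the vector
`v(p,i,j) = (1/2)(α(p)ψ(i)φ(j) + α(p)φ(i)ψ(j))` has squared ℓ² norm exactly
`1/2 + (1/2)|⟨ψ,φ⟩|²`. -/
theorem swap_test_completeness {P I : Type*} [Fintype P] [Fintype I] [Nonempty P] [Nonempty I]
    (α : P → ℂ) (ψ φ : I → ℂ)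
    (hα : ∑ p, ‖α p‖ ^ 2 = 1)
    (hψ : ∑ i, ‖ψ i‖ ^ 2 = 1) (hφ : ∑ i, ‖φ i‖ ^ 2 = 1) :
    ∑ x : P × I × I,
        ‖(1 / 2 : ℂ) * (α x.1 * ψ x.2.1 * φ x.2.2 + α x.1 * φ x.2.1 * ψ x.2.2)‖ ^ 2
      = 1 / 2 + 1 / 2 * ‖∑ i, (starRingEnd ℂ) (ψ i) * φ i‖ ^ 2 :=
  swap_test_completeness_general α ψ φ hα hψ hφ
end

section
/- Let H be a complex inner product space, let ψ ∈ H be a unit vector, let Q₀, Q₁ : H → H be unitary operators, and let Π₀, Π₁ : H → H be orthogonal projections. Assume Π₁Q₁ψ ≠ 0 and set β = Π₁Q₁ψ / ‖Π₁Q₁ψ‖. Then (1/2)(‖Π₀Q₀ψ‖² + ‖Π₁Q₁ψ‖²) ≤ (1/2)(1 + ‖Π₀ Q₀ Q₁† β‖). (Soundness inequality in the proof that 7-turn distributed quantum interactive protocols can be parallelized to 5 turns: the average of the acceptance probabilities of the two branches chosen by the random bit is bounded by one half plus half the norm of the accepted part of the composed evolution applied to the renormalized state β.) -/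
/-!
Write `φ = Q₀ψ` and `w = Q₀Q₁†β`, and put `a = ‖Π₀φ‖`, `c = ‖Π₀w‖`. Since `Q₀` and `Q₁` are
unitary, `|⟪w, φ⟫| = |⟪β, Q₁ψ⟫| = ‖Π₁Q₁ψ‖ =: b`, so it suffices to show `a² + b² ≤ 1 + c`.
Splitting `w` and `φ` along `Π₀` gives `b ≤ c a + c' a'`, with `a'`, `c'` the norms of the
complementary components. Writing `a = cos θ`, `c = cos η` this reads
`cos² θ + cos² (θ - η) = 1 + cos η · cos (2θ - η) ≤ 1 + cos η`.
-/

theorem sq_add_sq_le_one_add_of_le_mul_add_mul {a a' c c' b : ℝ} (ha : a ^ 2 + a' ^ 2 = 1)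
    (hc : c ^ 2 + c' ^ 2 ≤ 1) (hc₀ : 0 ≤ c) (hb₀ : 0 ≤ b) (hb : b ≤ c * a + c' * a') :
    a ^ 2 + b ^ 2 ≤ 1 + c := by
  -- `X = cos (2θ - η)`: an inner product of `(c, c')` with the unit vector `(a² - a'², 2aa')`.
  set X := c * (a ^ 2 - a' ^ 2) + c' * (2 * a * a')
  have hX : X ≤ 1 := by
    have hunit : (a ^ 2 - a' ^ 2) ^ 2 + (2 * a * a') ^ 2 = 1 := by
      linear_combination (a ^ 2 + a' ^ 2 + 1) * ha
    nlinarith [sq_nonneg (c - (a ^ 2 - a' ^ 2)), sq_nonneg (c' - 2 * a * a')]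
  have hexpand : (c * a + c' * a') ^ 2 + a ^ 2 ≤ 1 + c * X := by
    nlinarith [sq_nonneg a']
  nlinarith [mul_le_mul_of_nonneg_left hX hc₀]

theorem norm_inv_norm_smul_le_one {𝕜 E : Type*} [RCLike 𝕜] [SeminormedAddCommGroup E]
    [NormedSpace 𝕜 E] (x : E) : ‖(‖x‖⁻¹ : 𝕜) • x‖ ≤ 1 := by
  rw [norm_smul, norm_inv, RCLike.norm_ofReal, abs_norm]
  exact inv_mul_le_one_of_le₀ le_rfl (norm_nonneg x)

namespace LinearMap.IsSymmetricProjection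

variable {𝕜 E : Type*} [RCLike 𝕜] [NormedAddCommGroup E] [InnerProductSpace 𝕜 E]
  {T : E →ₗ[𝕜] E}

local notation "⟪" x ", " y "⟫" => inner 𝕜 x y

theorem inner_apply_sub_self (hT : T.IsSymmetricProjection) (x y : E) :
    ⟪T x, y - T y⟫ = 0 := by
  rw [hT.isSymmetric, map_sub, ← Module.End.mul_apply, hT.isIdempotentElem.eq, sub_self,
    inner_zero_right]

theorem norm_apply_sq_add_norm_sub_apply_sq (hT : T.IsSymmetricProjection) (x : E) :
    ‖T x‖ ^ 2 + ‖x - T x‖ ^ 2 = ‖x‖ ^ 2 := by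
  simpa only [sq, add_sub_cancel] using
    (norm_add_sq_eq_norm_sq_add_norm_sq_of_inner_eq_zero _ _ (hT.inner_apply_sub_self x x)).symm

theorem inner_eq_inner_apply_add_inner_sub_apply (hT : T.IsSymmetricProjection) (x y : E) :
    ⟪x, y⟫ = ⟪T x, T y⟫ + ⟪x - T x, y - T y⟫ := by
  have hcross : ⟪x - T x, T y⟫ = 0 := inner_eq_zero_symm.mp (hT.inner_apply_sub_self y x)
  conv_lhs => rw [← add_sub_cancel (T x) x, ← add_sub_cancel (T y) y]
  rw [inner_add_left, inner_add_right, inner_add_right, hT.inner_apply_sub_self, hcross]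
  ring

theorem inner_apply_self (hT : T.IsSymmetricProjection) (x : E) :
    ⟪T x, x⟫ = (‖T x‖ : 𝕜) ^ 2 := by
  nth_rw 2 [← add_sub_cancel (T x) x]
  rw [inner_add_right, hT.inner_apply_sub_self, add_zero, inner_self_eq_norm_sq_to_K]

theorem norm_inner_inv_norm_smul_apply_self (hT : T.IsSymmetricProjection) (x : E) :
    ‖⟪(‖T x‖⁻¹ : 𝕜) • T x, x⟫‖ = ‖T x‖ := by
  rw [inner_smul_left, hT.inner_apply_self, norm_mul, norm_pow, RCLike.norm_conj, norm_inv,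
    RCLike.norm_ofReal, abs_norm]
  rcases (norm_nonneg (T x)).eq_or_lt with h | h
  · simp [← h]
  · field_simp

theorem sq_norm_apply_add_sq_norm_inner_le (hT : T.IsSymmetricProjection) {x y : E}
    (hx : ‖x‖ = 1) (hy : ‖y‖ ≤ 1) :
    ‖T x‖ ^ 2 + ‖⟪y, x⟫‖ ^ 2 ≤ 1 + ‖T y‖ := by
  refine sq_add_sq_le_one_add_of_le_mul_add_mul (a' := ‖x - T x‖) (c' := ‖y - T y‖)
    ?_ ?_ (norm_nonneg _) (norm_nonneg _) ?_
  · rw [hT.norm_apply_sq_add_norm_sub_apply_sq, hx, one_pow]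
  · rw [hT.norm_apply_sq_add_norm_sub_apply_sq]
    exact pow_le_one₀ (norm_nonneg y) hy
  · rw [hT.inner_eq_inner_apply_add_inner_sub_apply]
    exact (norm_add_le _ _).trans
      (add_le_add (norm_inner_le_norm _ _) (norm_inner_le_norm _ _))

end LinearMap.IsSymmetricProjection

theorem seven_to_five_soundness_general {H : Type*} [NormedAddCommGroup H] [InnerProductSpace ℂ H]
    (ψ : H) (hψ : ‖ψ‖ = 1) (Q₀ Q₁ : H ≃ₗᵢ[ℂ] H) (T₀ T₁ : H →ₗ[ℂ] H)
    (hT₀idem : T₀ ∘ₗ T₀ = T₀) (hT₀sa : ∀ x y : H, (inner ℂ (T₀ x) y : ℂ) = inner ℂ x (T₀ y))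
    (hT₁idem : T₁ ∘ₗ T₁ = T₁) (hT₁sa : ∀ x y : H, (inner ℂ (T₁ x) y : ℂ) = inner ℂ x (T₁ y)) :
    (1 / 2 : ℝ) * (‖T₀ (Q₀ ψ)‖ ^ 2 + ‖T₁ (Q₁ ψ)‖ ^ 2)
      ≤ (1 / 2) * (1 + ‖T₀ (Q₀ (Q₁.symm ((‖T₁ (Q₁ ψ)‖)⁻¹ • T₁ (Q₁ ψ))))‖) := by
  have hT₀ : T₀.IsSymmetricProjection := ⟨hT₀idem, hT₀sa⟩
  have hT₁ : T₁.IsSymmetricProjection := ⟨hT₁idem, hT₁sa⟩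
  rw [← Complex.coe_smul, Complex.ofReal_inv]
  set β := ((‖T₁ (Q₁ ψ)‖)⁻¹ : ℂ) • T₁ (Q₁ ψ)
  have hoverlap : ‖inner ℂ (Q₀ (Q₁.symm β)) (Q₀ ψ)‖ = ‖T₁ (Q₁ ψ)‖ := by
    rw [Q₀.inner_map_map, ← Q₁.inner_map_map, Q₁.apply_symm_apply]
    exact hT₁.norm_inner_inv_norm_smul_apply_self (Q₁ ψ)
  have hkey := hT₀.sq_norm_apply_add_sq_norm_inner_le (x := Q₀ ψ) (y := Q₀ (Q₁.symm β))
    (by rw [Q₀.norm_map, hψ])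
    (by rw [Q₀.norm_map, Q₁.symm.norm_map]; exact norm_inv_norm_smul_le_one _)
  rw [hoverlap] at hkey
  linarith

/-- Soundness inequality in the proof that 7-turn distributed quantum interactive protocols
can be parallelized to 5 turns: for a unit vector `ψ`, unitaries `Q₀ Q₁` and orthogonal
projections `T₀ T₁` (self-adjoint idempotents) with `T₁ (Q₁ ψ) ≠ 0`, setting
`β = T₁(Q₁ψ)/‖T₁(Q₁ψ)‖`, the average `(1/2)(‖T₀Q₀ψ‖² + ‖T₁Q₁ψ‖²)` is at most
`(1/2)(1 + ‖T₀ Q₀ Q₁† β‖)`. -/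
theorem seven_to_five_soundness {H : Type*} [NormedAddCommGroup H] [InnerProductSpace ℂ H]
    (ψ : H) (hψ : ‖ψ‖ = 1) (Q₀ Q₁ : H ≃ₗᵢ[ℂ] H) (T₀ T₁ : H →ₗ[ℂ] H)
    (hT₀idem : T₀ ∘ₗ T₀ = T₀) (hT₀sa : ∀ x y : H, (inner ℂ (T₀ x) y : ℂ) = inner ℂ x (T₀ y))
    (hT₁idem : T₁ ∘ₗ T₁ = T₁) (hT₁sa : ∀ x y : H, (inner ℂ (T₁ x) y : ℂ) = inner ℂ x (T₁ y))
    (hne : T₁ (Q₁ ψ) ≠ 0) :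
    (1 / 2 : ℝ) * (‖T₀ (Q₀ ψ)‖ ^ 2 + ‖T₁ (Q₁ ψ)‖ ^ 2)
      ≤ (1 / 2) * (1 + ‖T₀ (Q₀ (Q₁.symm ((‖T₁ (Q₁ ψ)‖)⁻¹ • T₁ (Q₁ ψ))))‖) :=
  seven_to_five_soundness_general ψ hψ Q₀ Q₁ T₀ T₁ hT₀idem hT₀sa hT₁idem hT₁sa
end
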